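/- arXiv:2302.11964 — 10 statements merged into one kernel-verified Lean document; each statement's English description precedes it below -/
import Mathlib

section
/- For real R > 1 and integers n ≥ 3, k ≥ 0, the quantity σ_D(k,R) := ((k+n-2)·R^(2k+n-2) + k)/(R^(2k+n-2) - 1) is strictly decreasing as a function of R on (1,∞). -/
open Set

lemma strictAntiOn_mul_add_div_sub_one {𝕜 : Type*} [Field 𝕜] [LinearOrder 𝕜]
    [IsStrictOrderedRing 𝕜] {a b : 𝕜} (hab : 0 < a + b) :
    StrictAntiOn (fun x : 𝕜 => (a * x + b) / (x - 1)) (Ioi 1) := by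
  intro x hx y hy hxy
  have hx1 : 0 < x - 1 := sub_pos.2 hx
  have hy1 : 0 < y - 1 := sub_pos.2 hy
  -- `(a x + b) / (x - 1) = a + (a + b) / (x - 1)`, and the second term decreases
  rw [div_lt_div_iff₀ hy1 hx1]
  nlinarith

lemma pow_strictMonoOn_Ioi_one {𝕜 : Type*} [Field 𝕜] [LinearOrder 𝕜]
    [IsStrictOrderedRing 𝕜] {m : ℕ} (hm : m ≠ 0) :
    StrictMonoOn (· ^ m : 𝕜 → 𝕜) (Ioi 1) :=
  (pow_left_strictMonoOn₀ hm).mono fun _ hx => le_of_lt (zero_lt_one.trans hx)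

theorem stmt_0 (n k : ℕ) (hn : 3 ≤ n) :
    StrictAntiOn (fun R : ℝ =>
      (((k : ℝ) + n - 2) * R ^ (2 * k + n - 2) + k) / (R ^ (2 * k + n - 2) - 1))
      (Set.Ioi (1 : ℝ)) := by
  have hm : 2 * k + n - 2 ≠ 0 := by omega
  have hsum : (0 : ℝ) < (k + n - 2) + k := by
    have : (3 : ℝ) ≤ n := by exact_mod_cast hn
    linarith [(k.cast_nonneg : (0 : ℝ) ≤ k)]
  exact (strictAntiOn_mul_add_div_sub_one hsum).comp_strictMonoOn
    (pow_strictMonoOn_Ioi_one hm) fun _ hR => mem_Ioi.2 (one_lt_pow₀ hR hm)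
end

section
/- For each integer n ≥ 3, the polynomial equation R^(2n-2) - (n-1)·R^n - (n-1)^2·R^(n-2) + (n-1) = 0 has exactly one real solution R with R > 1. -/
/-!
Away from `R = 1` the equation says that `(n-2) R^(n-2) / (R^(n-2) - 1)`, a strictly decreasing
function of `R > 1`, equals `(n-1) (R^n - 1) / (R^n + n - 1)`, a strictly increasing one; so there is
at most one root. One exists by the intermediate value theorem, since the polynomial is negative at
`R = 1` and positive at `R = n`.
-/

open Set

noncomputable def criticalPoly (n : ℕ) (R : ℝ) : ℝ :=
  R ^ (2 * n - 2) - ((n : ℝ) - 1) * R ^ n - ((n : ℝ) - 1) ^ 2 * R ^ (n - 2) + ((n : ℝ) - 1)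

-- The Steklov–Dirichlet bound `σ_0^D` and the Steklov–Neumann bound `σ_1^N`
-- on the annulus `1 < |x| < R`.
noncomputable def dirichletBound (n : ℕ) (R : ℝ) : ℝ :=
  ((n : ℝ) - 2) * R ^ (n - 2) / (R ^ (n - 2) - 1)

noncomputable def neumannBound (n : ℕ) (R : ℝ) : ℝ :=
  ((n : ℝ) - 1) * (R ^ n - 1) / (R ^ n + n - 1)

section

variable {n : ℕ} {R : ℝ}

lemma dirichletBound_eq (hR : R ^ (n - 2) ≠ 1) :
    dirichletBound n R = ((n : ℝ) - 2) + ((n : ℝ) - 2) / (R ^ (n - 2) - 1) := by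
  have : R ^ (n - 2) - 1 ≠ 0 := sub_ne_zero.mpr hR
  rw [dirichletBound]
  field_simp
  ring

lemma neumannBound_eq (hR : R ^ n + n - 1 ≠ 0) :
    neumannBound n R = ((n : ℝ) - 1) - n * ((n : ℝ) - 1) / (R ^ n + n - 1) := by
  rw [neumannBound]
  field_simp
  ring

lemma pow_add_natCast_sub_one_pos (hn : 1 ≤ n) (hR : 0 < R) : 0 < R ^ n + n - 1 := by
  have : (1 : ℝ) ≤ n := by exact_mod_cast hn
  linarith [pow_pos hR n]

lemma strictAntiOn_dirichletBound (hn : 3 ≤ n) : StrictAntiOn (dirichletBound n) (Ioi 1) := by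
  intro x (hx : 1 < x) y (hy : 1 < y) hxy
  have hn' : (3 : ℝ) ≤ n := by exact_mod_cast hn
  have hx' : 1 < x ^ (n - 2) := one_lt_pow₀ hx (by omega)
  have hy' : 1 < y ^ (n - 2) := one_lt_pow₀ hy (by omega)
  have hxy' : x ^ (n - 2) < y ^ (n - 2) := pow_lt_pow_left₀ hxy (by linarith) (by omega)
  rw [dirichletBound_eq hx'.ne', dirichletBound_eq hy'.ne', add_lt_add_iff_left]
  exact div_lt_div_of_pos_left (by linarith) (by linarith) (by linarith)

lemma strictMonoOn_neumannBound (hn : 2 ≤ n) : StrictMonoOn (neumannBound n) (Ioi 1) := by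
  intro x (hx : 1 < x) y (hy : 1 < y) hxy
  have hn' : (2 : ℝ) ≤ n := by exact_mod_cast hn
  have hx' := pow_add_natCast_sub_one_pos (by omega : 1 ≤ n) (zero_lt_one.trans hx)
  have hy' := pow_add_natCast_sub_one_pos (by omega : 1 ≤ n) (zero_lt_one.trans hy)
  have hxy' : x ^ n < y ^ n := pow_lt_pow_left₀ hxy (by linarith) (by omega)
  rw [neumannBound_eq hx'.ne', neumannBound_eq hy'.ne', sub_lt_sub_iff_left]
  exact div_lt_div_of_pos_left (by nlinarith) hx' (by linarith)

lemma criticalPoly_eq (hn : 2 ≤ n) :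
    criticalPoly n R = ((n : ℝ) - 1) * (R ^ n - 1) * (R ^ (n - 2) - 1)
      - ((n : ℝ) - 2) * R ^ (n - 2) * (R ^ n + n - 1) := by
  rw [criticalPoly, show 2 * n - 2 = n + (n - 2) by omega, pow_add]
  ring

lemma criticalPoly_eq_zero_iff (hn : 3 ≤ n) (hR : 1 < R) :
    criticalPoly n R = 0 ↔ dirichletBound n R = neumannBound n R := by
  have hD : R ^ (n - 2) - 1 ≠ 0 := (sub_pos.mpr (one_lt_pow₀ hR (by omega))).ne'
  have hN := (pow_add_natCast_sub_one_pos (by omega : 1 ≤ n) (zero_lt_one.trans hR)).ne'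
  rw [dirichletBound, neumannBound, div_eq_div_iff hD hN, criticalPoly_eq (by omega), sub_eq_zero,
    eq_comm]

lemma eq_of_criticalPoly_eq_zero (hn : 3 ≤ n) {x y : ℝ} (hx : 1 < x) (hy : 1 < y)
    (hPx : criticalPoly n x = 0) (hPy : criticalPoly n y = 0) : x = y := by
  have hmono : StrictMonoOn (fun R => neumannBound n R + -dirichletBound n R) (Ioi 1) :=
    (strictMonoOn_neumannBound (by omega)).add (strictAntiOn_dirichletBound hn).neg
  rw [criticalPoly_eq_zero_iff hn hx] at hPx
  rw [criticalPoly_eq_zero_iff hn hy] at hPy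
  exact hmono.injOn hx hy (by simp only [hPx, hPy, add_neg_cancel])

lemma criticalPoly_one_neg (hn : 3 ≤ n) : criticalPoly n 1 < 0 := by
  have hn' : (3 : ℝ) ≤ n := by exact_mod_cast hn
  simp only [criticalPoly, one_pow, mul_one]
  nlinarith

lemma criticalPoly_eq_pow_mul_add (hn : 2 ≤ n) :
    criticalPoly n R
      = R ^ (n - 2) * (R ^ n - ((n : ℝ) - 1) * R ^ 2 - ((n : ℝ) - 1) ^ 2) + ((n : ℝ) - 1) := by
  obtain ⟨m, rfl⟩ := Nat.exists_eq_add_of_le' hn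
  rw [criticalPoly, show 2 * (m + 2) - 2 = m + (m + 2) by omega, Nat.add_sub_cancel]
  ring

lemma criticalPoly_natCast_pos (hn : 3 ≤ n) : 0 < criticalPoly n n := by
  have hn' : (3 : ℝ) ≤ n := by exact_mod_cast hn
  have hcube : (n : ℝ) ^ 3 ≤ (n : ℝ) ^ n := pow_le_pow_right₀ (by linarith) hn
  -- `n^n - (n-1) n^2 - (n-1)^2 ≥ n^3 - (n-1) n^2 - (n-1)^2 = 2n - 1`
  have hbracket : 0 < (n : ℝ) ^ n - ((n : ℝ) - 1) * n ^ 2 - ((n : ℝ) - 1) ^ 2 := by nlinarith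
  have hpow : 0 < (n : ℝ) ^ (n - 2) := by positivity
  rw [criticalPoly_eq_pow_mul_add (by omega)]
  linarith [mul_pos hpow hbracket]

lemma exists_criticalPoly_eq_zero (hn : 3 ≤ n) : ∃ R ∈ Ioo 1 (n : ℝ), criticalPoly n R = 0 := by
  have hcont : Continuous (criticalPoly n) := by unfold criticalPoly; fun_prop
  have h1n : (1 : ℝ) ≤ n := by exact_mod_cast (by omega : 1 ≤ n)
  exact intermediate_value_Ioo h1n hcont.continuousOn
    ⟨criticalPoly_one_neg hn, criticalPoly_natCast_pos hn⟩

end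

theorem stmt_4 (n : ℕ) (hn : 3 ≤ n) :
    ∃! R : ℝ, 1 < R ∧
      R ^ (2 * n - 2) - ((n : ℝ) - 1) * R ^ n - ((n : ℝ) - 1) ^ 2 * R ^ (n - 2)
        + ((n : ℝ) - 1) = 0 := by
  obtain ⟨R, hR, hPR⟩ := exists_criticalPoly_eq_zero hn
  exact ⟨R, ⟨hR.1, hPR⟩, fun S hS => eq_of_criticalPoly_eq_zero hn hS.1 hR.1 hS.2 hPR⟩
end

section
/- For each integer n ≥ 3, if R_1(n) > 1 is the unique real solution in (1,∞) of R^(2n-2) - (n-1)·R^n - (n-1)^2·R^(n-2) + (n-1) = 0, then R_1(n) < exp(3·log(n-1)/(n-2)). -/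
/-!
Put `a = n - 1` and `x = R₁ ^ (n - 2)`, so that the equation reads
`R₁² x (x - a) = a² x - a`. The right side is below `a² x`, hence `R₁² (x - a) < a²`, and
since `R₁² > 1` this forces `x < a + a² < a³` (as `a ≥ 2`). Taking `(n - 2)`-th roots gives the bound.
-/

open Real

lemma lt_add_sq_of_quadratic_eq_zero {S a x : ℝ} (hS : 1 ≤ S) (ha : 0 < a) (hx : 0 < x)
    (h : S * x ^ 2 - a * S * x - a ^ 2 * x + a = 0) : x < a + a ^ 2 := by
  have hfactor : x * (S * (x - a)) < x * a ^ 2 := by nlinarith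
  have hSxa : S * (x - a) < a ^ 2 := lt_of_mul_lt_mul_left hfactor hx.le
  rcases le_or_gt a x with hax | hxa
  · nlinarith [mul_le_mul_of_nonneg_right hS (sub_nonneg.mpr hax)]
  · nlinarith

lemma add_sq_lt_pow_three {a : ℝ} (ha : 2 ≤ a) : a + a ^ 2 < a ^ 3 := by
  nlinarith

lemma lt_exp_log_div_of_pow_lt {R b : ℝ} {m : ℕ} (hR : 0 < R) (hm : 0 < m) (h : R ^ m < b) :
    R < exp (log b / m) := by
  have hlog : m * log R < log b := by
    rw [← Real.log_pow]
    exact Real.log_lt_log (pow_pos hR m) h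
  calc R = exp (log R) := (exp_log hR).symm
    _ < exp (log b / m) := exp_lt_exp.mpr ((lt_div_iff₀ (by positivity)).mpr (by linarith))

theorem stmt_5 (n : ℕ) (hn : 3 ≤ n) (R₁ : ℝ) (hR : 1 < R₁)
    (heq : R₁ ^ (2 * n - 2) - ((n : ℝ) - 1) * R₁ ^ n
      - ((n : ℝ) - 1) ^ 2 * R₁ ^ (n - 2) + ((n : ℝ) - 1) = 0) :
    R₁ < Real.exp (3 * Real.log ((n : ℝ) - 1) / ((n : ℝ) - 2)) := by
  obtain ⟨m, rfl⟩ : ∃ m, n = m + 2 := ⟨n - 2, by omega⟩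
  set a : ℝ := ((m + 2 : ℕ) : ℝ) - 1
  have ha : 2 ≤ a := by
    have : (3 : ℝ) ≤ (m + 2 : ℕ) := by exact_mod_cast hn
    linarith
  have hquad : R₁ ^ 2 * (R₁ ^ m) ^ 2 - a * R₁ ^ 2 * R₁ ^ m - a ^ 2 * R₁ ^ m + a = 0 := by
    rw [show 2 * (m + 2) - 2 = 2 * m + 2 by omega, Nat.add_sub_cancel] at heq
    linear_combination heq
  have hx : R₁ ^ m < a ^ 3 :=
    (lt_add_sq_of_quadratic_eq_zero (one_le_pow₀ hR.le) (by linarith) (by positivity) hquad).trans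
      (add_sq_lt_pow_three ha)
  have hroot := lt_exp_log_div_of_pow_lt (by linarith) (by omega) hx
  rw [Real.log_pow, Nat.cast_ofNat] at hroot
  rwa [show ((m + 2 : ℕ) : ℝ) - 2 = m by push_cast; ring]
end

section
/- For each integer n ≥ 3, if R_1(n) > 1 solves R^(2n-2) - (n-1)·R^n - (n-1)^2·R^(n-2) + (n-1) = 0, then R_1(n) → 1 as n → ∞; equivalently, the critical length L_1(n) = 2(R_1(n) - 1) tends to 0. -/
/-!
Since `R n > 1`, the equation gives
`R^(n-2) · R^n = (n-1) R^n + (n-1)² R^(n-2) - (n-1) ≤ n(n-1) R^n`, so `R^(n-2) ≤ n²`.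
Hence `1 < R n ≤ exp (2 log n / (n - 2))`, and the right-hand side tends to `1`.
-/

open Filter Topology Real

lemma pow_sub_two_le_sq_of_eq {n : ℕ} {r : ℝ} (hn : 2 ≤ n) (hr : 1 ≤ r)
    (h : r ^ (2 * n - 2) - ((n : ℝ) - 1) * r ^ n
      - ((n : ℝ) - 1) ^ 2 * r ^ (n - 2) + ((n : ℝ) - 1) = 0) :
    r ^ (n - 2) ≤ (n : ℝ) ^ 2 := by
  have hsplit : r ^ (2 * n - 2) = r ^ (n - 2) * r ^ n := by
    rw [← pow_add]; congr 1; omega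
  have hmono : r ^ (n - 2) ≤ r ^ n := pow_le_pow_right₀ hr (by omega)
  have hn1 : (1 : ℝ) ≤ n := by exact_mod_cast (by omega : 1 ≤ n)
  refine le_of_mul_le_mul_right ?_ (by positivity : 0 < r ^ n)
  calc r ^ (n - 2) * r ^ n
      = ((n : ℝ) - 1) * r ^ n + ((n : ℝ) - 1) ^ 2 * r ^ (n - 2) - ((n : ℝ) - 1) := by
        linarith
    _ ≤ ((n : ℝ) - 1) * r ^ n + ((n : ℝ) - 1) ^ 2 * r ^ n := by
        linarith [mul_le_mul_of_nonneg_left hmono (sq_nonneg ((n : ℝ) - 1))]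
    _ ≤ (n : ℝ) ^ 2 * r ^ n := by nlinarith [one_le_pow₀ (n := n) hr]

lemma le_exp_two_mul_log_div_of_pow_le {n : ℕ} {r : ℝ} (hn : 3 ≤ n) (hr : 0 < r)
    (h : r ^ (n - 2) ≤ (n : ℝ) ^ 2) :
    r ≤ exp (2 * log n / ((n : ℝ) - 2)) := by
  have hlog := log_le_log (by positivity) h
  rw [log_pow, log_pow, Nat.cast_sub (by omega : 2 ≤ n), Nat.cast_ofNat] at hlog
  have hn2 : (0 : ℝ) < n - 2 := by
    have : (3 : ℝ) ≤ n := by exact_mod_cast hn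
    linarith
  rw [← log_le_iff_le_exp hr, le_div_iff₀ hn2]
  linarith

lemma tendsto_two_mul_log_div_sub_two :
    Tendsto (fun n : ℕ => 2 * log n / ((n : ℝ) - 2)) atTop (𝓝 0) := by
  have h := ((tendsto_pow_log_div_mul_add_atTop 1 (-2) 1 one_ne_zero).const_mul 2).comp
    tendsto_natCast_atTop_atTop
  simp only [mul_zero, pow_one, one_mul, ← sub_eq_add_neg, ← mul_div_assoc] at h
  exact h

theorem stmt_6 (R : ℕ → ℝ)
    (hR : ∀ n : ℕ, 3 ≤ n → 1 < R n ∧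
      (R n) ^ (2 * n - 2) - ((n : ℝ) - 1) * (R n) ^ n
        - ((n : ℝ) - 1) ^ 2 * (R n) ^ (n - 2) + ((n : ℝ) - 1) = 0) :
    Filter.Tendsto R Filter.atTop (nhds 1) ∧
      Filter.Tendsto (fun n => 2 * (R n - 1)) Filter.atTop (nhds 0) := by
  have hupper : Tendsto (fun n : ℕ => exp (2 * log n / ((n : ℝ) - 2))) atTop (𝓝 1) := by
    simpa [Function.comp_def] using (continuous_exp.tendsto 0).comp tendsto_two_mul_log_div_sub_two
  have hlim : Tendsto R atTop (𝓝 1) := by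
    refine tendsto_of_tendsto_of_tendsto_of_le_of_le' tendsto_const_nhds hupper ?_ ?_ <;>
      filter_upwards [eventually_ge_atTop 3] with n hn
    · exact (hR n hn).1.le
    · obtain ⟨hr, heq⟩ := hR n hn
      exact le_exp_two_mul_log_div_of_pow_le hn (by linarith)
        (pow_sub_two_le_sq_of_eq (by omega) hr.le heq)
  refine ⟨hlim, ?_⟩
  simpa using (hlim.sub_const 1).const_mul 2
end

section
/- For each integer n ≥ 3, let B_n = (n-2)·R_1^(n-2)/(R_1^(n-2) - 1), where R_1 > 1 is the unique solution of R^(2n-2) - (n-1)R^n - (n-1)^2 R^(n-2) + (n-1) = 0. Then n-2 < B_n < n-1, and consequently B_n → ∞ as n → ∞. -/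
/-!
Put `x = R^(n-2)` and `m = n - 1`. Since `R^(2n-2) = x R^n`, the defining equation of `R` reads
`R^n (x - m) = m (m x - 1)`, whose right-hand side is positive; hence `x > n - 1`. With
`x > 1` this is exactly what `n - 2 < (n - 2) x / (x - 1) < n - 1` needs, and the lower bound
`n - 2` tends to infinity.
-/

open Filter

lemma lt_of_mul_sub_eq_mul_mul_sub_one {x y m : ℝ} (hy : 0 < y) (hx : 1 < x) (hm : 1 ≤ m)
    (h : y * (x - m) = m * (m * x - 1)) : m < x := by
  have hpos : 0 < y * (x - m) := h ▸ mul_pos (by linarith) (by nlinarith)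
  exact sub_pos.mp (pos_of_mul_pos_right hpos hy.le)

lemma natCast_sub_one_lt_pow_of_root {n : ℕ} {R : ℝ} (hn : 3 ≤ n) (hR : 1 < R)
    (h : R ^ (2 * n - 2) - ((n : ℝ) - 1) * R ^ n - ((n : ℝ) - 1) ^ 2 * R ^ (n - 2)
      + ((n : ℝ) - 1) = 0) :
    (n : ℝ) - 1 < R ^ (n - 2) := by
  have hsplit : R ^ (2 * n - 2) = R ^ (n - 2) * R ^ n := by
    rw [← pow_add]; congr 1; omega
  have hm : (1 : ℝ) ≤ n - 1 := by
    have : (3 : ℝ) ≤ n := by exact_mod_cast hn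
    linarith
  rw [hsplit] at h
  exact lt_of_mul_sub_eq_mul_mul_sub_one (pow_pos (zero_lt_one.trans hR) n)
    (one_lt_pow₀ hR (by omega)) hm (by linear_combination h)

lemma lt_mul_div_sub_one {k x : ℝ} (hk : 0 < k) (hx : 1 < x) : k < k * x / (x - 1) := by
  rw [lt_div_iff₀ (by linarith)]
  linarith

lemma mul_div_sub_one_lt {k x : ℝ} (hx : 1 < x) (hkx : k + 1 < x) :
    k * x / (x - 1) < k + 1 := by
  rw [div_lt_iff₀ (by linarith)]
  linarith

theorem stmt_7 (R : ℕ → ℝ)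
    (hR : ∀ n : ℕ, 3 ≤ n → 1 < R n ∧
      (R n) ^ (2 * n - 2) - ((n : ℝ) - 1) * (R n) ^ n
        - ((n : ℝ) - 1) ^ 2 * (R n) ^ (n - 2) + ((n : ℝ) - 1) = 0) :
    (∀ n : ℕ, 3 ≤ n →
      (n : ℝ) - 2 < ((n : ℝ) - 2) * (R n) ^ (n - 2) / ((R n) ^ (n - 2) - 1) ∧
      ((n : ℝ) - 2) * (R n) ^ (n - 2) / ((R n) ^ (n - 2) - 1) < (n : ℝ) - 1) ∧
    Filter.Tendsto
      (fun n : ℕ => ((n : ℝ) - 2) * (R n) ^ (n - 2) / ((R n) ^ (n - 2) - 1))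
      Filter.atTop Filter.atTop := by
  have bounds : ∀ n : ℕ, 3 ≤ n →
      (n : ℝ) - 2 < ((n : ℝ) - 2) * (R n) ^ (n - 2) / ((R n) ^ (n - 2) - 1) ∧
      ((n : ℝ) - 2) * (R n) ^ (n - 2) / ((R n) ^ (n - 2) - 1) < (n : ℝ) - 1 := by
    intro n hn
    obtain ⟨hR1, hroot⟩ := hR n hn
    have hx : 1 < R n ^ (n - 2) := one_lt_pow₀ hR1 (by omega)
    have hlarge := natCast_sub_one_lt_pow_of_root hn hR1 hroot
    have hk : (0 : ℝ) < n - 2 := by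
      have : (3 : ℝ) ≤ n := by exact_mod_cast hn
      linarith
    have upper := mul_div_sub_one_lt (k := (n : ℝ) - 2) hx (by linarith)
    exact ⟨lt_mul_div_sub_one hk hx, by linarith⟩
  refine ⟨bounds, tendsto_atTop_mono' (f₁ := fun n : ℕ => (n : ℝ) - 2) _ ?_ ?_⟩
  · filter_upwards [eventually_ge_atTop 3] with n hn using (bounds n hn).1.le
  · simpa only [sub_eq_add_neg] using
      tendsto_atTop_add_const_right atTop (-2 : ℝ) tendsto_natCast_atTop_atTop
end

section
/- Fix an integer n ≥ 3 and reals B > n-2 and 0 < δ < (B - (n-2))/2 with B < n-1. Define R_δ = ((B-δ)/(B-(n-2)-δ))^(1/(n-2)) and R_* = (B/(B-(n-2)))^(1/(n-2)). Then R_δ - R_* ≤ C(n,B)·δ where C(n,B) = (2/(B-(n-2))^2) / (B/(B-(n-2)))^((n-3)/(n-2)). -/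
/-! With `m = n - 2` and `a = B - m`, the two radii are the `m`-th roots of `X = (B - δ)/(a - δ)`
and `Y = B/a`. Concavity of `t ↦ t ^ (1/m)` (Bernoulli's inequality) bounds
`X ^ (1/m) - Y ^ (1/m)` by the tangent estimate `(1/m) Y ^ (1/m - 1) (X - Y)`, and
`X - Y = m (1/(a - δ) - 1/a) ≤ 2 m δ / a²` because `δ ≤ a/2`. -/

open Real

theorem rpow_sub_rpow_le_mul_sub {p : ℝ} (hp0 : 0 ≤ p) (hp1 : p ≤ 1) {x y : ℝ}
    (hx : 0 ≤ x) (hy : 0 < y) : x ^ p - y ^ p ≤ p * y ^ (p - 1) * (x - y) := by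
  have hbernoulli : (x / y) ^ p ≤ 1 + p * (x / y - 1) := by
    simpa using rpow_one_add_le_one_add_mul_self (s := x / y - 1)
      (by linarith [div_nonneg hx hy.le]) hp0 hp1
  rw [div_rpow hx hy.le, div_le_iff₀ (rpow_pos_of_pos hy p)] at hbernoulli
  have hexpand : (1 + p * (x / y - 1)) * y ^ p = y ^ p + p * (y ^ p / y) * (x - y) := by
    field_simp
  rw [rpow_sub_one hy.ne']
  linarith

theorem one_div_sub_one_div_le {a δ : ℝ} (ha : 0 < a) (hδ0 : 0 ≤ δ) (hδ : 2 * δ ≤ a) :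
    1 / (a - δ) - 1 / a ≤ 2 * δ / a ^ 2 := by
  have had : 0 < a - δ := by linarith
  rw [div_sub_div _ _ had.ne' ha.ne', div_le_div_iff₀ (by positivity) (by positivity)]
  nlinarith [mul_nonneg (mul_nonneg hδ0 ha.le) (by linarith : 0 ≤ a - 2 * δ)]

theorem stmt_8_general (n : ℕ) (hn : 3 ≤ n) (B δ : ℝ)
    (hB1 : (n : ℝ) - 2 < B)
    (hδ0 : 0 < δ) (hδ : δ < (B - ((n : ℝ) - 2)) / 2) :
    ((B - δ) / (B - ((n : ℝ) - 2) - δ)) ^ ((1 : ℝ) / ((n : ℝ) - 2))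
      - (B / (B - ((n : ℝ) - 2))) ^ ((1 : ℝ) / ((n : ℝ) - 2))
      ≤ (2 / (B - ((n : ℝ) - 2)) ^ 2)
          / (B / (B - ((n : ℝ) - 2))) ^ (((n : ℝ) - 3) / ((n : ℝ) - 2)) * δ := by
  have hm : (1 : ℝ) ≤ n - 2 := by
    have : (3 : ℝ) ≤ n := by exact_mod_cast hn
    linarith
  have hexp : ((n : ℝ) - 3) / (n - 2) = -(1 / (n - 2) - 1) := by
    field_simp
    ring
  rw [hexp]
  set m : ℝ := n - 2
  set a : ℝ := B - m
  have ha : 0 < a := by linarith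
  have hY : 0 < B / a := div_pos (by linarith) ha
  have hratio : (B - δ) / (a - δ) - B / a = m * (1 / (a - δ) - 1 / a) := by
    have : a - δ ≠ 0 := by linarith
    field_simp
    ring
  calc _ ≤ 1 / m * (B / a) ^ (1 / m - 1) * ((B - δ) / (a - δ) - B / a) :=
        rpow_sub_rpow_le_mul_sub (by positivity) (by rw [div_le_one] <;> linarith)
          (div_nonneg (by linarith) (by linarith)) hY
    _ ≤ 1 / m * (B / a) ^ (1 / m - 1) * (m * (2 * δ / a ^ 2)) := by
        rw [hratio]
        gcongr
        exact one_div_sub_one_div_le ha hδ0.le (by linarith)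
    _ = _ := by
        rw [rpow_neg hY.le]
        field_simp

theorem stmt_8 (n : ℕ) (hn : 3 ≤ n) (B δ : ℝ)
    (hB1 : (n : ℝ) - 2 < B) (hB2 : B < (n : ℝ) - 1)
    (hδ0 : 0 < δ) (hδ : δ < (B - ((n : ℝ) - 2)) / 2) :
    ((B - δ) / (B - ((n : ℝ) - 2) - δ)) ^ ((1 : ℝ) / ((n : ℝ) - 2))
      - (B / (B - ((n : ℝ) - 2))) ^ ((1 : ℝ) / ((n : ℝ) - 2))
      ≤ (2 / (B - ((n : ℝ) - 2)) ^ 2)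
          / (B / (B - ((n : ℝ) - 2))) ^ (((n : ℝ) - 3) / ((n : ℝ) - 2)) * δ :=
  stmt_8_general n hn B δ hB1 hδ0 hδ
end

section
/- For integers n ≥ 3 and i ≥ 0, the function R ↦ σ_D(i,R) = ((i+n-2)R^(2i+n-2) + i)/(R^(2i+n-2) - 1) on (1,∞) has derivative with respect to L (where R = 1+L/2) equal to -4(L+2)(2i+n-2)^2(1+L/2)^(2i+n) / (4(1+L/2)^(2i+n) - L^2 - 4L - 4)^2, which is strictly negative for L > 0. -/
/-
With R = 1 + L/2 and m = 2i + n - 2, the eigenvalue is the Möbius transform (a u + i)/(u - 1) of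
u = R^m, where a + i = m; its derivative in R is therefore -m² R^(m-1)/(R^m - 1)², and the chain
rule contributes dR/dL = 1/2. Since L + 2 = 2R, the stated closed form is the same expression
multiplied through by 16 R⁴, and it is negative because R > 1.
-/

theorem hasDerivAt_div_pow_sub_one {𝕜 : Type*} [NontriviallyNormedField 𝕜] (a b : 𝕜) (m : ℕ)
    {x : 𝕜} (hx : x ^ m ≠ 1) :
    HasDerivAt (fun x => (a * x ^ m + b) / (x ^ m - 1))
      (-((a + b) * (m * x ^ (m - 1))) / (x ^ m - 1) ^ 2) x := by
  have hpow := hasDerivAt_pow m x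
  have hden : x ^ m - 1 ≠ 0 := sub_ne_zero.mpr hx
  refine (((hpow.const_mul a).add_const b).fun_div (hpow.sub_const 1) hden).congr_deriv ?_
  ring

theorem one_lt_one_add_half_pow {m : ℕ} (hm : m ≠ 0) {L : ℝ} (hL : 0 < L) :
    1 < (1 + L / 2) ^ m :=
  one_lt_pow₀ (by linarith) hm

theorem deriv_closed_form_eq {m : ℕ} (hm : m ≠ 0) {L : ℝ} (hL : 0 < L) :
    -4 * (L + 2) * (m : ℝ) ^ 2 * (1 + L / 2) ^ (m + 2) /
        (4 * (1 + L / 2) ^ (m + 2) - L ^ 2 - 4 * L - 4) ^ 2 =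
      -((m : ℝ) * (m * (1 + L / 2) ^ (m - 1))) / ((1 + L / 2) ^ m - 1) ^ 2 * (1 / 2) := by
  obtain ⟨k, rfl⟩ : ∃ k, m = k + 1 := ⟨m - 1, by omega⟩
  have hu : (1 + L / 2) ^ (k + 1) - 1 ≠ 0 := (sub_pos.mpr (one_lt_one_add_half_pow hm hL)).ne'
  have hD : 4 * (1 + L / 2) ^ (k + 1 + 2) - L ^ 2 - 4 * L - 4 =
      (L + 2) ^ 2 * ((1 + L / 2) ^ (k + 1) - 1) := by ring
  have hR : 1 + L / 2 ≠ 0 := by positivity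
  rw [hD, Nat.add_sub_cancel]
  field_simp
  ring

theorem deriv_closed_form_neg {m : ℕ} (hm : m ≠ 0) {L : ℝ} (hL : 0 < L) :
    -((m : ℝ) * (m * (1 + L / 2) ^ (m - 1))) / ((1 + L / 2) ^ m - 1) ^ 2 * (1 / 2) < 0 := by
  have hu : 0 < (1 + L / 2) ^ m - 1 := sub_pos.mpr (one_lt_one_add_half_pow hm hL)
  have hm' : (0 : ℝ) < m := by exact_mod_cast Nat.pos_of_ne_zero hm
  have : 0 < (m : ℝ) * (m * (1 + L / 2) ^ (m - 1)) / ((1 + L / 2) ^ m - 1) ^ 2 * (1 / 2) := by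
    positivity
  linarith [neg_div (((1 + L / 2) ^ m - 1) ^ 2) ((m : ℝ) * (m * (1 + L / 2) ^ (m - 1)))]

theorem stmt_11 (n i : ℕ) (hn : 3 ≤ n) (L : ℝ) (hL : 0 < L) :
    HasDerivAt (fun L : ℝ =>
      (((i : ℝ) + n - 2) * (1 + L / 2) ^ (2 * i + n - 2) + i) /
        ((1 + L / 2) ^ (2 * i + n - 2) - 1))
      (-4 * (L + 2) * ((2 * i : ℝ) + n - 2) ^ 2 * (1 + L / 2) ^ (2 * i + n) /
        (4 * (1 + L / 2) ^ (2 * i + n) - L ^ 2 - 4 * L - 4) ^ 2) L ∧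
    -4 * (L + 2) * ((2 * i : ℝ) + n - 2) ^ 2 * (1 + L / 2) ^ (2 * i + n) /
        (4 * (1 + L / 2) ^ (2 * i + n) - L ^ 2 - 4 * L - 4) ^ 2 < 0 := by
  set m := 2 * i + n - 2 with hm_def
  have hm : m ≠ 0 := by omega
  have hexp : 2 * i + n = m + 2 := by omega
  have hmR : (2 * i : ℝ) + n - 2 = m := by
    rw [hm_def, Nat.cast_sub (by omega)]
    push_cast
    ring
  have hcoef : ((i : ℝ) + n - 2) + i = m := by linarith
  rw [hexp, hmR, deriv_closed_form_eq hm hL]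
  refine ⟨?_, deriv_closed_form_neg hm hL⟩
  have hR : HasDerivAt (fun L : ℝ => 1 + L / 2) (1 / 2) L :=
    ((hasDerivAt_id L).div_const 2).const_add 1
  have := (hasDerivAt_div_pow_sub_one ((i : ℝ) + n - 2) (i : ℝ) m
    (one_lt_one_add_half_pow hm hL).ne').comp L hR
  rwa [hcoef] at this
end

section
/- Fix integers n ≥ 3 and i ≥ 1. The equation σ_D(i,R) = σ_N(i+1,R), i.e. ((i+n-2)R^(2i+n-2)+i)/(R^(2i+n-2)-1) = (i+1)(i+n-1)(R^(2i+n)-1)/((i+1)R^(2i+n)+i+n-1), has a unique solution R_i in (1,∞), and it is equivalent to (i+1)·R^(2i+n-2)·(R^(2i+n) - (2i+n-1)R^2 - (i+n-1)(2i+n-1)/(i+1)) + (i+n-1) = 0. -/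
/-!
With `x = R ^ (2k+n-2)`, `σ_D(k,R) = (k+n-2) + (2k+n-2)/(x-1)` decreases to `k+n-2` on `(1, ∞)`,
while `σ_N(k,R) = (k+n-2) - (k+n-2)(2k+n-2)/(kx+k+n-2)` increases to `k+n-2`. Hence
`σ_N(i+1,·) - σ_D(i,·)` is strictly increasing with limit `1` at infinity, so it vanishes at most
once. Clearing denominators turns it into the polynomial of the statement times a positive factor;
that polynomial equals `-(2i+n-2)(2i+n) < 0` at `R = 1`, so the intermediate value theorem gives
the zero.
-/

open Filter Set Topology

namespace SteklovAnnulus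

/-- `sigmaD n k R` and `sigmaN n k R` are `σ_D(k,R)` and `σ_N(k,R)` for the annulus `1 < |x| < R`
in `ℝⁿ`. -/
noncomputable def sigmaD (n k : ℕ) (R : ℝ) : ℝ :=
  (((k : ℝ) + n - 2) * R ^ (2 * k + n - 2) + k) / (R ^ (2 * k + n - 2) - 1)

noncomputable def sigmaN (n k : ℕ) (R : ℝ) : ℝ :=
  (k : ℝ) * ((k : ℝ) + n - 2) * (R ^ (2 * k + n - 2) - 1) /
    ((k : ℝ) * R ^ (2 * k + n - 2) + k + n - 2)

noncomputable def crossingPoly (n i : ℕ) (R : ℝ) : ℝ :=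
  ((i : ℝ) + 1) * R ^ (2 * i + n - 2) *
      (R ^ (2 * i + n) - ((2 * i : ℝ) + n - 1) * R ^ 2
        - ((i : ℝ) + n - 1) * ((2 * i : ℝ) + n - 1) / ((i : ℝ) + 1))
    + ((i : ℝ) + n - 1)

variable {n k i : ℕ} {R : ℝ}

lemma sigmaD_denom_pos (h : 2 < 2 * k + n) (hR : 1 < R) : 0 < R ^ (2 * k + n - 2) - 1 :=
  sub_pos.mpr (one_lt_pow₀ hR (by omega))

lemma sigmaD_eq (hR : R ^ (2 * k + n - 2) - 1 ≠ 0) :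
    sigmaD n k R = ((k : ℝ) + n - 2) + ((2 * k : ℝ) + n - 2) / (R ^ (2 * k + n - 2) - 1) := by
  rw [sigmaD]
  field_simp
  ring

lemma sigmaN_eq (hR : (k : ℝ) * R ^ (2 * k + n - 2) + k + n - 2 ≠ 0) :
    sigmaN n k R = ((k : ℝ) + n - 2) -
      ((k : ℝ) + n - 2) * ((2 * k : ℝ) + n - 2) /
        ((k : ℝ) * R ^ (2 * k + n - 2) + k + n - 2) := by
  rw [sigmaN, eq_sub_iff_add_eq, ← add_div, div_eq_iff hR]
  ring

lemma sigmaN_denom_pos (hk : 0 < k) (h : 2 < k + n) (hR : 0 ≤ R) :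
    0 < (k : ℝ) * R ^ (2 * k + n - 2) + k + n - 2 := by
  have : (2 : ℝ) < k + n := by exact_mod_cast h
  have : 0 ≤ (k : ℝ) * R ^ (2 * k + n - 2) := by positivity
  linarith

lemma sigmaD_strictAntiOn (h : 2 < 2 * k + n) : StrictAntiOn (sigmaD n k) (Ioi 1) := by
  have hm : 2 * k + n - 2 ≠ 0 := by omega
  have hc : (0 : ℝ) < (2 * k : ℝ) + n - 2 := by
    have : (2 : ℝ) < 2 * k + n := by exact_mod_cast h
    linarith
  intro r (hr : 1 < r) s (hs : 1 < s) hrs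
  have hr' := sigmaD_denom_pos h hr
  rw [sigmaD_eq (sigmaD_denom_pos h hs).ne', sigmaD_eq hr'.ne']
  gcongr

lemma sigmaN_strictMonoOn (hk : 0 < k) (h : 2 < k + n) : StrictMonoOn (sigmaN n k) (Ici 0) := by
  have hm : 2 * k + n - 2 ≠ 0 := by omega
  have hc : (0 : ℝ) < ((k : ℝ) + n - 2) * ((2 * k : ℝ) + n - 2) := by
    have : (2 : ℝ) < k + n := by exact_mod_cast h
    have : (0 : ℝ) < k := by exact_mod_cast hk
    apply mul_pos <;> linarith
  intro r (hr : 0 ≤ r) s (hs : 0 ≤ s) hrs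
  have hr' := sigmaN_denom_pos hk h hr
  rw [sigmaN_eq hr'.ne', sigmaN_eq (sigmaN_denom_pos hk h hs).ne']
  gcongr

lemma tendsto_sigmaD_atTop (h : 2 < 2 * k + n) :
    Tendsto (sigmaD n k) atTop (𝓝 ((k : ℝ) + n - 2)) := by
  have hm : 2 * k + n - 2 ≠ 0 := by omega
  have hform : (fun R => ((k : ℝ) + n - 2) + ((2 * k : ℝ) + n - 2) / (R ^ (2 * k + n - 2) - 1))
      =ᶠ[atTop] sigmaD n k := by
    filter_upwards [eventually_gt_atTop 1] with R hR
    exact (sigmaD_eq (sigmaD_denom_pos h hR).ne').symm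
  refine Tendsto.congr' hform ?_
  have hden : Tendsto (fun R : ℝ => R ^ (2 * k + n - 2) - 1) atTop atTop := by
    simpa only [sub_eq_add_neg] using tendsto_atTop_add_const_right _ (-1) (tendsto_pow_atTop hm)
  simpa using tendsto_const_nhds.add (tendsto_const_nhds.div_atTop hden)

lemma tendsto_sigmaN_atTop (hk : 0 < k) (h : 2 < k + n) :
    Tendsto (sigmaN n k) atTop (𝓝 ((k : ℝ) + n - 2)) := by
  have hm : 2 * k + n - 2 ≠ 0 := by omega
  have hform : (fun R => ((k : ℝ) + n - 2) -
      ((k : ℝ) + n - 2) * ((2 * k : ℝ) + n - 2) / ((k : ℝ) * R ^ (2 * k + n - 2) + k + n - 2))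
      =ᶠ[atTop] sigmaN n k := by
    filter_upwards [eventually_ge_atTop 0] with R hR
    exact (sigmaN_eq (sigmaN_denom_pos hk h hR).ne').symm
  refine Tendsto.congr' hform ?_
  have hden : Tendsto (fun R : ℝ => (k : ℝ) * R ^ (2 * k + n - 2) + k + n - 2) atTop atTop := by
    simp only [add_sub_assoc, add_assoc]
    exact tendsto_atTop_add_const_right _ _
      ((tendsto_pow_atTop hm).const_mul_atTop (by exact_mod_cast hk))
  simpa using tendsto_const_nhds.sub (tendsto_const_nhds.div_atTop hden)

lemma sigmaN_succ :
    sigmaN n (i + 1) R = ((i : ℝ) + 1) * ((i : ℝ) + n - 1) * (R ^ (2 * i + n) - 1) /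
      (((i : ℝ) + 1) * R ^ (2 * i + n) + i + n - 1) := by
  rw [sigmaN, show 2 * (i + 1) + n - 2 = 2 * i + n by omega]
  push_cast
  ring

lemma sigmaN_succ_denom_pos (h : 2 < 2 * i + n) (hR : 1 < R) :
    0 < ((i : ℝ) + 1) * R ^ (2 * i + n) + i + n - 1 := by
  have : (2 : ℝ) < 2 * i + n := by exact_mod_cast h
  have : 0 < ((i : ℝ) + 1) * R ^ (2 * i + n) := by have := hR.le; positivity
  linarith

lemma crossingPoly_eq_mul_sub (h : 2 < 2 * i + n) (hR : 1 < R) :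
    crossingPoly n i R =
      (R ^ (2 * i + n - 2) - 1) * (((i : ℝ) + 1) * R ^ (2 * i + n) + i + n - 1) *
      (sigmaN n (i + 1) R - sigmaD n i R) := by
  have hD := (sigmaD_denom_pos h hR).ne'
  have hN := (sigmaN_succ_denom_pos h hR).ne'
  have hpow : R ^ (2 * i + n) = R ^ (2 * i + n - 2) * R ^ 2 := by
    rw [← pow_add, Nat.sub_add_cancel (by omega)]
  rw [sigmaN_succ, sigmaD, div_sub_div _ _ hN hD, mul_div_assoc', eq_div_iff (mul_ne_zero hN hD),
    crossingPoly, hpow]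
  field_simp
  ring

lemma crossingPoly_one_neg (h : 2 < 2 * i + n) : crossingPoly n i 1 < 0 := by
  have : (2 : ℝ) < 2 * i + n := by exact_mod_cast h
  have key : crossingPoly n i 1 = -(((2 * i : ℝ) + n - 2) * ((2 * i : ℝ) + n)) := by
    rw [crossingPoly]
    field_simp
    ring
  rw [key, neg_lt_zero]
  apply mul_pos <;> linarith

lemma sigmaD_eq_sigmaN_succ_iff (h : 2 < 2 * i + n) (hR : 1 < R) :
    sigmaD n i R = sigmaN n (i + 1) R ↔ crossingPoly n i R = 0 := by
  rw [crossingPoly_eq_mul_sub h hR, mul_eq_zero,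
    or_iff_right (mul_pos (sigmaD_denom_pos h hR) (sigmaN_succ_denom_pos h hR)).ne', sub_eq_zero,
    eq_comm]

lemma existsUnique_sigmaD_eq_sigmaN_succ (h : 2 < 2 * i + n) :
    ∃! R : ℝ, 1 < R ∧ sigmaD n i R = sigmaN n (i + 1) R := by
  have hN : 2 < i + 1 + n := by omega
  have hmono : StrictMonoOn (fun R => sigmaN n (i + 1) R - sigmaD n i R) (Ioi 1) := by
    simpa only [sub_eq_add_neg] using ((sigmaN_strictMonoOn i.succ_pos hN).mono
      (Ioi_subset_Ici zero_le_one)).add (sigmaD_strictAntiOn h).neg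
  obtain ⟨b, hb1, hb⟩ : ∃ b, 1 < b ∧ sigmaD n i b < sigmaN n (i + 1) b := by
    have := (tendsto_sigmaD_atTop h).eventually_lt (tendsto_sigmaN_atTop i.succ_pos hN)
      (by push_cast; linarith)
    exact ((eventually_gt_atTop 1).and this).exists
  have hb_pos : 0 < crossingPoly n i b := by
    rw [crossingPoly_eq_mul_sub h hb1]
    exact mul_pos (mul_pos (sigmaD_denom_pos h hb1) (sigmaN_succ_denom_pos h hb1)) (sub_pos.mpr hb)
  obtain ⟨c, ⟨hc1, -⟩, hc⟩ := intermediate_value_Ioo hb1.le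
    (by unfold crossingPoly; fun_prop) ⟨crossingPoly_one_neg h, hb_pos⟩
  have hroot := (sigmaD_eq_sigmaN_succ_iff h hc1).mpr hc
  refine ⟨c, ⟨hc1, hroot⟩, fun r ⟨hr1, hr⟩ => hmono.injOn hr1 hc1 ?_⟩
  simp only [hr, hroot, sub_self]

end SteklovAnnulus

open SteklovAnnulus in
theorem stmt_12_general (n i : ℕ) (hn : 3 ≤ n) :
    (∃! R : ℝ, 1 < R ∧
      (((i : ℝ) + n - 2) * R ^ (2 * i + n - 2) + i) / (R ^ (2 * i + n - 2) - 1) =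
        ((i : ℝ) + 1) * ((i : ℝ) + n - 1) * (R ^ (2 * i + n) - 1) /
          (((i : ℝ) + 1) * R ^ (2 * i + n) + i + n - 1)) ∧
    (∀ R : ℝ, 1 < R →
      ((((i : ℝ) + n - 2) * R ^ (2 * i + n - 2) + i) / (R ^ (2 * i + n - 2) - 1) =
        ((i : ℝ) + 1) * ((i : ℝ) + n - 1) * (R ^ (2 * i + n) - 1) /
          (((i : ℝ) + 1) * R ^ (2 * i + n) + i + n - 1) ↔
       ((i : ℝ) + 1) * R ^ (2 * i + n - 2) *
          (R ^ (2 * i + n) - ((2 * i : ℝ) + n - 1) * R ^ 2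
            - ((i : ℝ) + n - 1) * ((2 * i : ℝ) + n - 1) / ((i : ℝ) + 1))
          + ((i : ℝ) + n - 1) = 0)) := by
  have h : 2 < 2 * i + n := by omega
  have hunique := existsUnique_sigmaD_eq_sigmaN_succ h
  have hiff := fun R (hR : 1 < R) => sigmaD_eq_sigmaN_succ_iff h hR
  simp only [sigmaD, sigmaN_succ, crossingPoly] at hunique hiff
  exact ⟨hunique, hiff⟩

theorem stmt_12 (n i : ℕ) (hn : 3 ≤ n) (hi : 1 ≤ i) :
    (∃! R : ℝ, 1 < R ∧
      (((i : ℝ) + n - 2) * R ^ (2 * i + n - 2) + i) / (R ^ (2 * i + n - 2) - 1) =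
        ((i : ℝ) + 1) * ((i : ℝ) + n - 1) * (R ^ (2 * i + n) - 1) /
          (((i : ℝ) + 1) * R ^ (2 * i + n) + i + n - 1)) ∧
    (∀ R : ℝ, 1 < R →
      ((((i : ℝ) + n - 2) * R ^ (2 * i + n - 2) + i) / (R ^ (2 * i + n - 2) - 1) =
        ((i : ℝ) + 1) * ((i : ℝ) + n - 1) * (R ^ (2 * i + n) - 1) /
          (((i : ℝ) + 1) * R ^ (2 * i + n) + i + n - 1) ↔
       ((i : ℝ) + 1) * R ^ (2 * i + n - 2) *
          (R ^ (2 * i + n) - ((2 * i : ℝ) + n - 1) * R ^ 2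
            - ((i : ℝ) + n - 1) * ((2 * i : ℝ) + n - 1) / ((i : ℝ) + 1))
          + ((i : ℝ) + n - 1) = 0)) :=
  stmt_12_general n i hn
end

section
/- Fix an integer n ≥ 3. For each integer i ≥ 1, let R_i be the unique solution in (1,∞) of (i+1)R^(2i+n-2)(R^(2i+n) - (2i+n-1)R^2 - (i+n-1)(2i+n-1)/(i+1)) + (i+n-1) = 0. Then R_i → 1 as i → ∞, and so the lengths L_i* = 2(R_i - 1) tend to 0. -/
/-!
Write `m = 2i + n - 2` and `X = R_i ^ m`. Since the constant term `i + n - 1` of the equation is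
nonnegative, the bracket multiplying `(i + 1) X > 0` must be nonpositive, and as `R_i ≥ 1` this
forces `X ≤ (2i + n - 1)(2i + n)/(i + 1) < (m + 2)²`. Hence `0 ≤ log R_i ≤ 2 log (m + 2) / m → 0`.
-/

open Real Filter Topology

theorem tendsto_log_add_const_div_atTop (c : ℝ) :
    Tendsto (fun x : ℝ => log (x + c) / x) atTop (𝓝 0) := by
  refine ((tendsto_pow_log_div_mul_add_atTop 1 (-c) 1 one_ne_zero).comp
    (tendsto_atTop_add_const_right _ c tendsto_id)).congr fun x => ?_
  simp

theorem tendsto_nhds_one_of_pow_le_add_pow {R : ℕ → ℝ} {m : ℕ → ℕ} (c : ℝ) (k : ℕ)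
    (hm : Tendsto m atTop atTop)
    (hR : ∀ᶠ i in atTop, 1 ≤ R i ∧ R i ^ m i ≤ ((m i : ℝ) + c) ^ k) :
    Tendsto R atTop (𝓝 1) := by
  have hm' : Tendsto (fun i => (m i : ℝ)) atTop atTop :=
    tendsto_natCast_atTop_atTop.comp hm
  have hbound : Tendsto (fun i => k * (log ((m i : ℝ) + c) / m i)) atTop (𝓝 0) := by
    simpa using ((tendsto_log_add_const_div_atTop c).comp hm').const_mul (k : ℝ)
  have hlog : Tendsto (fun i => log (R i)) atTop (𝓝 0) := by
    refine tendsto_of_tendsto_of_tendsto_of_le_of_le' tendsto_const_nhds hbound ?_ ?_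
    · filter_upwards [hR] with i hi using log_nonneg hi.1
    · filter_upwards [hR, hm'.eventually_gt_atTop 0] with i ⟨hR1, hpow⟩ hmpos
      have hlog_pow := log_le_log (pow_pos (by linarith) _) hpow
      rw [log_pow, log_pow] at hlog_pow
      rw [mul_div_assoc', le_div_iff₀ hmpos]
      linarith
  refine ((continuous_exp.tendsto 0).comp hlog).congr' ?_ |>.trans (by rw [exp_zero])
  filter_upwards [hR] with i hi
  exact exp_log (by linarith [hi.1])

theorem pow_lt_sq_of_steklov_eq {i n : ℕ} (hi : 1 ≤ i) {R : ℝ} (hR : 1 ≤ R)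
    (h : ((i : ℝ) + 1) * R ^ (2 * i + n - 2) *
          (R ^ (2 * i + n) - ((2 * i : ℝ) + n - 1) * R ^ 2
            - ((i : ℝ) + n - 1) * ((2 * i : ℝ) + n - 1) / ((i : ℝ) + 1))
          + ((i : ℝ) + n - 1) = 0) :
    R ^ (2 * i + n - 2) < ((2 * i : ℝ) + n) ^ 2 := by
  set X := R ^ (2 * i + n - 2)
  set A : ℝ := 2 * i + n - 1
  set K : ℝ := ((i : ℝ) + n - 1) * A / ((i : ℝ) + 1) with hK_def
  have hC : (0 : ℝ) ≤ i + n - 1 := by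
    have : (1 : ℝ) ≤ i := by exact_mod_cast hi
    linarith [(n.cast_nonneg : (0 : ℝ) ≤ n)]
  have hA : 0 ≤ A := by linarith [(i.cast_nonneg : (0 : ℝ) ≤ i)]
  have hsplit : R ^ (2 * i + n) = X * R ^ 2 := by rw [← pow_add]; congr 1; omega
  have hK : 0 ≤ K := by positivity
  have hAK : A + K = A * (2 * i + n) / (i + 1) := by rw [hK_def]; field_simp; ring
  have hbracket : X * R ^ 2 - A * R ^ 2 - K ≤ 0 := by
    rw [← hsplit]
    refine nonpos_of_mul_nonpos_right (a := (i + 1) * X) ?_ (by positivity)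
    linarith
  have hX : X ≤ A + K := by
    have hR2 : 1 ≤ R ^ 2 := one_le_pow₀ hR
    nlinarith
  calc X ≤ A * (2 * i + n) / (i + 1) := hAK ▸ hX
    _ < (2 * i + n) ^ 2 := by
      rw [div_lt_iff₀ (by positivity)]
      nlinarith

theorem stmt_14_general (n : ℕ) (R : ℕ → ℝ)
    (hR : ∀ i : ℕ, 1 ≤ i → 1 < R i ∧
      ((i : ℝ) + 1) * (R i) ^ (2 * i + n - 2) *
          ((R i) ^ (2 * i + n) - ((2 * i : ℝ) + n - 1) * (R i) ^ 2
            - ((i : ℝ) + n - 1) * ((2 * i : ℝ) + n - 1) / ((i : ℝ) + 1))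
          + ((i : ℝ) + n - 1) = 0) :
    Filter.Tendsto R Filter.atTop (nhds 1) ∧
      Filter.Tendsto (fun i => 2 * (R i - 1)) Filter.atTop (nhds 0) := by
  have hlim : Tendsto R atTop (𝓝 1) := by
    refine tendsto_nhds_one_of_pow_le_add_pow (m := fun i => 2 * i + n - 2) 2 2
      (tendsto_atTop_mono (fun i => show i - 1 ≤ 2 * i + n - 2 by omega)
        (tendsto_sub_atTop_nat 1)) ?_
    filter_upwards [eventually_ge_atTop 1] with i hi
    obtain ⟨hR1, heq⟩ := hR i hi
    have hcast : (((2 * i + n - 2 : ℕ) : ℝ) + 2) = 2 * i + n := by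
      rw [Nat.cast_sub (by omega)]; push_cast; ring
    exact ⟨hR1.le, hcast ▸ (pow_lt_sq_of_steklov_eq hi hR1.le heq).le⟩
  refine ⟨hlim, ?_⟩
  simpa using (hlim.sub_const 1).const_mul 2

theorem stmt_14 (n : ℕ) (hn : 3 ≤ n) (R : ℕ → ℝ)
    (hR : ∀ i : ℕ, 1 ≤ i → 1 < R i ∧
      ((i : ℝ) + 1) * (R i) ^ (2 * i + n - 2) *
          ((R i) ^ (2 * i + n) - ((2 * i : ℝ) + n - 1) * (R i) ^ 2
            - ((i : ℝ) + n - 1) * ((2 * i : ℝ) + n - 1) / ((i : ℝ) + 1))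
          + ((i : ℝ) + n - 1) = 0) :
    Filter.Tendsto R Filter.atTop (nhds 1) ∧
      Filter.Tendsto (fun i => 2 * (R i - 1)) Filter.atTop (nhds 0) :=
  stmt_14_general n R hR
end

section
/- For each integer n ≥ 3 and real R > 1, we have σ_N(1,R) < σ_N(2,R), where σ_N(k,R) = k(k+n-2)(R^(2k+n-2)-1)/(kR^(2k+n-2)+k+n-2). -/
/-! With `a = R ^ n` and `b = R ^ (n + 2)`, clearing the (positive) denominators turns the claim
into a polynomial inequality whose defect is
`(a - 1) * (2a + n² - n) + (b - a) * (2a + 2(n² - 1))`, a sum of positive terms since `1 < a < b`. -/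

theorem cross_mul_lt_of_one_lt_of_lt {m a b : ℝ} (hm : 1 ≤ m) (ha : 1 < a) (hab : a < b) :
    (m - 1) * (a - 1) * (2 * b + m) < 2 * m * (b - 1) * (a + m - 1) := by
  have hdefect : 2 * m * (b - 1) * (a + m - 1) - (m - 1) * (a - 1) * (2 * b + m) =
      (a - 1) * (2 * a + m * (m - 1)) + (b - a) * (2 * a + 2 * (m ^ 2 - 1)) := by ring
  have hm2 : 0 ≤ m ^ 2 - 1 := by nlinarith
  have hpos : 0 < (a - 1) * (2 * a + m * (m - 1)) + (b - a) * (2 * a + 2 * (m ^ 2 - 1)) := by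
    have : 0 ≤ m * (m - 1) := by nlinarith
    have h1 : 0 < (a - 1) * (2 * a + m * (m - 1)) := by apply mul_pos <;> linarith
    have h2 : 0 < (b - a) * (2 * a + 2 * (m ^ 2 - 1)) := by apply mul_pos <;> linarith
    linarith
  linarith

theorem sub_one_mul_div_lt_two_mul_div {m a b : ℝ} (hm : 1 ≤ m) (ha : 1 < a) (hab : a < b) :
    (m - 1) * (a - 1) / (a + m - 1) < 2 * m * (b - 1) / (2 * b + m) := by
  rw [div_lt_div_iff₀ (by linarith) (by linarith)]
  exact cross_mul_lt_of_one_lt_of_lt hm ha hab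

theorem stmt_18 (n : ℕ) (hn : 3 ≤ n) (R : ℝ) (hR : 1 < R) :
    ((n : ℝ) - 1) * (R ^ n - 1) / (R ^ n + n - 1) <
      2 * (n : ℝ) * (R ^ (n + 2) - 1) / (2 * R ^ (n + 2) + n) := by
  have hn1 : (1 : ℝ) ≤ n := by exact_mod_cast (by omega : 1 ≤ n)
  have ha : 1 < R ^ n := one_lt_pow₀ hR (by omega)
  have hab : R ^ n < R ^ (n + 2) := pow_lt_pow_right₀ hR (by omega)
  exact sub_one_mul_div_lt_two_mul_div hn1 ha hab
end
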